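/- arXiv:1002.0853 — 3 statements merged into one kernel-verified Lean document; each statement's English description precedes it below -/
import Mathlib

section
/- Any finitely supported sequence c: ℤ^d → ℝ with ∑_{k∈ℤ^d} c_k = 0 can be written as a finite sum c = ∑_{i=1}^d ∇ᵢ b^{(i)} where each b^{(i)}: ℤ^d → ℝ is finitely supported and ∇ᵢ denotes the forward difference operator in the i-th coordinate: (∇ᵢ b)_k = b_k − b_{k−eᵢ}. -/
/-!
The sequences `∑ᵢ ∇ᵢ bᵢ` with finitely supported `bᵢ` form a submodule `S`. Since
`δₐ - δ_{a+g+h} = (δₐ - δ_{a+g}) + (δ_{a+g} - δ_{a+g+h})`, the shifts `g` with `δₐ - δ_{a+g} ∈ S`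
for all `a` form a subgroup; it contains the generators `eᵢ` (`δₐ - δ_{a+eᵢ} = ∇ᵢ δₐ`), so it is
all of `ℤ^d`. A sequence `c` with zero sum is then `∑ₐ cₐ (δₐ - δ₀) ∈ S`.
-/

open Function

section

variable {G R ι : Type*} [AddGroup G] [Ring R] [Fintype ι]

def sumBackwardDiff (v : ι → G) : (ι → G →₀ R) →ₗ[R] G → R where
  toFun b k := ∑ i, (b i k - b i (k - v i))
  map_add' b b' := by
    ext k
    simp only [Pi.add_apply, Finsupp.coe_add, ← Finset.sum_add_distrib]
    exact Finset.sum_congr rfl fun i _ => by abel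
  map_smul' r b := by
    ext k
    simp [Finset.mul_sum, mul_sub]

@[simp]
lemma sumBackwardDiff_apply (v : ι → G) (b : ι → G →₀ R) (k : G) :
    sumBackwardDiff v b k = ∑ i, (b i k - b i (k - v i)) :=
  rfl

variable [DecidableEq G] (v : ι → G)

lemma single_sub_single_add_mem_range (a : G) (i : ι) :
    Pi.single a 1 - Pi.single (a + v i) 1 ∈ LinearMap.range (sumBackwardDiff (R := R) v) := by
  classical
  refine ⟨Pi.single i (Finsupp.single a 1), funext fun k => ?_⟩
  rw [sumBackwardDiff_apply, Fintype.sum_eq_single i fun j hj => by simp [Pi.single_eq_of_ne hj]]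
  simp [Finsupp.single_apply, Pi.single_apply, eq_sub_iff_add_eq, eq_comm (a := k)]

lemma single_sub_single_add_mem_range_of_mem_closure {g : G}
    (hg : g ∈ AddSubgroup.closure (Set.range v)) (a : G) :
    Pi.single a 1 - Pi.single (a + g) 1 ∈ LinearMap.range (sumBackwardDiff (R := R) v) := by
  induction hg using AddSubgroup.closure_induction generalizing a with
  | mem g hg =>
    obtain ⟨i, rfl⟩ := hg
    exact single_sub_single_add_mem_range v a i
  | zero => simp
  | add g h _ _ hg hh =>
    have := add_mem (hg a) (hh (a + g))
    rwa [sub_add_sub_cancel, add_assoc] at this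
  | neg g _ hg =>
    have := neg_mem (hg (a + -g))
    rwa [neg_sub, neg_add_cancel_right] at this

theorem mem_range_sumBackwardDiff_of_sum_eq_zero
    (hv : AddSubgroup.closure (Set.range v) = ⊤) {c : G → R} (s : Finset G)
    (hs : support c ⊆ s) (hsum : ∑ a ∈ s, c a = 0) :
    c ∈ LinearMap.range (sumBackwardDiff v) := by
  -- `δ₀` is written as `δ_{a + -a}` to fit the previous lemma with `g = -a`.
  have hc : c = ∑ a ∈ s, c a • (Pi.single a 1 - Pi.single (a + -a) 1 : G → R) := by
    simp only [add_neg_cancel, smul_sub, Finset.sum_sub_distrib, ← Finset.sum_smul, hsum,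
      zero_smul, sub_zero]
    ext k
    simp only [Finset.sum_apply, Pi.smul_apply, Pi.single_apply, smul_eq_mul, mul_ite, mul_one,
      mul_zero, Finset.sum_ite_eq]
    split_ifs with hk
    · rfl
    · exact notMem_support.mp fun hk' => hk (hs hk')
  rw [hc]
  exact Submodule.sum_mem _ fun a _ => Submodule.smul_mem _ _ <|
    single_sub_single_add_mem_range_of_mem_closure v (hv ▸ AddSubgroup.mem_top _) a

end

lemma AddSubgroup.closure_range_single_one (d : ℕ) :
    AddSubgroup.closure (Set.range fun i : Fin d => (Pi.single i 1 : Fin d → ℤ)) = ⊤ := by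
  have : (fun i : Fin d => (Pi.single i 1 : Fin d → ℤ)) = Pi.basisFun ℤ (Fin d) :=
    funext fun i => (Pi.basisFun_apply ℤ (Fin d) i).symm
  rw [← Submodule.span_int_eq_addSubgroupClosure, this, (Pi.basisFun ℤ (Fin d)).span_eq,
    Submodule.top_toAddSubgroup]

theorem zero_sum_eq_sum_of_differences_general
    (d : ℕ) (c : (Fin d → ℤ) → ℝ)
    (hfin : (Function.support c).Finite)
    (hsum : HasSum c 0) :
    ∃ b : Fin d → ((Fin d → ℤ) → ℝ),
      (∀ i, (Function.support (b i)).Finite) ∧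
      ∀ k : Fin d → ℤ,
        c k = ∑ i : Fin d, (b i k - b i (k - Pi.single i 1)) := by
  have hsupp : support c ⊆ hfin.toFinset := by simp
  obtain ⟨b, hb⟩ := mem_range_sumBackwardDiff_of_sum_eq_zero _
    (AddSubgroup.closure_range_single_one d) hfin.toFinset hsupp
    ((tsum_eq_sum' hsupp).symm.trans hsum.tsum_eq)
  exact ⟨fun i => b i, fun i => (b i).hasFiniteSupport, fun k => (congrFun hb k).symm⟩

/-- Any finitely supported sequence c : ℤ^d → ℝ with total sum
zero is a finite sum c = ∑ᵢ ∇ᵢ b⁽ⁱ⁾ of forward differences of finitely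
supported sequences b⁽ⁱ⁾, where (∇ᵢ b)_k = b_k − b_{k−eᵢ}. -/
theorem zero_sum_eq_sum_of_differences
    (d : ℕ) (hd : 0 < d) (c : (Fin d → ℤ) → ℝ)
    (hfin : (Function.support c).Finite)
    (hsum : HasSum c 0) :
    ∃ b : Fin d → ((Fin d → ℤ) → ℝ),
      (∀ i, (Function.support (b i)).Finite) ∧
      ∀ k : Fin d → ℤ,
        c k = ∑ i : Fin d, (b i k - b i (k - Pi.single i 1)) :=
  zero_sum_eq_sum_of_differences_general d c hfin hsum
end

section
/- More generally, if a finitely supported sequence c: ℤ^d → ℝ satisfies ∑_{k∈ℤ^d} c_k P(k) = 0 for every polynomial P of total degree at most N, then c is a finite linear combination of sequences of the form ∇^μ δ_{·−β} with |μ| = N+1 and β ∈ ℤ^d, where ∇^μ = ∇₁^{μ₁}⋯∇_d^{μ_d} is the mixed difference operator of multi-order μ. -/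
/-- Forward difference in the i-th coordinate, as an endomorphism of
sequences ℤ^d → ℝ: (∇ᵢ f)(k) = f(k) − f(k − eᵢ). -/
def forwardDiff (d : ℕ) (i : Fin d) : Function.End ((Fin d → ℤ) → ℝ) :=
  fun f k => f k - f (k - Pi.single i 1)

/-- Mixed difference operator ∇^μ = ∇₁^{μ₁} ⋯ ∇_d^{μ_d}. -/
def mixedDiff (d : ℕ) (μ : Fin d → ℕ) : Function.End ((Fin d → ℤ) → ℝ) :=
  (List.ofFn (fun i : Fin d => (forwardDiff d i) ^ (μ i))).prod

/-- The Kronecker delta sequence δ_{·−β}. -/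
def kronDelta (d : ℕ) (β : Fin d → ℤ) : (Fin d → ℤ) → ℝ :=
  fun l => if l = β then 1 else 0

/-!
Identify finitely supported sequences on `ℤ^d` with the group algebra `ℝ[ℤ^d]`, in which `∇ᵢ` is
multiplication by `1 - xᵢ`. If the support of `c` lies in a box with lower corner `v`, each `δ_k` is
`x^v ∏ xᵢ ^ aᵢ` with `aᵢ = kᵢ - vᵢ ≥ 0`, and the binomial theorem for `xᵢ = 1 - (1 - xᵢ)` expands
`c = ∑ₜ bₜ x^v ∏ (1 - xᵢ) ^ tᵢ`. Up to sign, `bₜ` is the moment of `c` against the polynomial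
`k ↦ ∏ (kᵢ - vᵢ).choose tᵢ` of degree `|t|`, so it vanishes for `|t| ≤ N`; every remaining term has
`|t| > N` and is divisible by the symbol `(1 - x)^μ` of some `∇^μ` with `|μ| = N + 1`.
-/

open Finset AddMonoidAlgebra

lemma pow_eq_sum_range_zsmul_one_sub_pow {R : Type*} [CommRing R] (x : R) {a M : ℕ}
    (h : a ≤ M) : x ^ a = ∑ t ∈ range (M + 1), ((-1) ^ t * a.choose t : ℤ) • (1 - x) ^ t := by
  rw [show x ^ a = (-(1 - x) + 1) ^ a by ring, add_pow,
    ← sum_subset (range_subset_range.2 (by omega : a + 1 ≤ M + 1))]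
  · refine sum_congr rfl fun t _ => ?_
    rw [neg_pow, zsmul_eq_mul]
    push_cast
    ring
  · intro t _ ht
    rw [mem_range, not_lt] at ht
    simp [Nat.choose_eq_zero_of_lt (by omega : a < t)]

lemma prod_pow_eq_sum_piFinset_zsmul_prod_one_sub_pow {ι R : Type*} [Fintype ι] [DecidableEq ι]
    [CommRing R] (x : ι → R) {a M : ι → ℕ} (h : a ≤ M) :
    ∏ i, x i ^ a i = ∑ t ∈ Fintype.piFinset fun i => range (M i + 1),
      (∏ i, (-1) ^ t i * (a i).choose (t i) : ℤ) • ∏ i, (1 - x i) ^ t i := by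
  simp_rw [fun i => pow_eq_sum_range_zsmul_one_sub_pow (x i) (h i), prod_univ_sum, zsmul_eq_mul,
    Int.cast_prod, ← prod_mul_distrib]

section

variable {d : ℕ}

abbrev LatticeAlgebra (d : ℕ) : Type := AddMonoidAlgebra ℝ (Fin d → ℤ)

noncomputable abbrev shiftMonomial (d : ℕ) (i : Fin d) : LatticeAlgebra d :=
  single (Pi.single i 1) 1

noncomputable def diffSymbol (d : ℕ) (μ : Fin d → ℕ) : LatticeAlgebra d :=
  ∏ i, (1 - shiftMonomial d i) ^ μ i

def Intertwines (T : Function.End ((Fin d → ℤ) → ℝ)) (a : LatticeAlgebra d) :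
    Prop :=
  ∀ f : LatticeAlgebra d, T f.coeff = (a * f).coeff

lemma intertwines_forwardDiff (i : Fin d) :
    Intertwines (forwardDiff d i) (1 - shiftMonomial d i) := by
  intro f
  funext k
  simp [forwardDiff, sub_mul, coeff_sub, neg_add_eq_sub]

lemma Intertwines.mul {S T : Function.End ((Fin d → ℤ) → ℝ)} {a b : LatticeAlgebra d}
    (hS : Intertwines S a) (hT : Intertwines T b) : Intertwines (S * T) (a * b) := by
  intro f
  rw [mul_assoc, ← hS, ← hT]
  rfl

lemma Intertwines.pow {T : Function.End ((Fin d → ℤ) → ℝ)} {a : LatticeAlgebra d}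
    (hT : Intertwines T a) (n : ℕ) : Intertwines (T ^ n) (a ^ n) := by
  induction n with
  | zero => intro f; rw [pow_zero, pow_zero, one_mul]; rfl
  | succ n ih => rw [pow_succ, pow_succ]; exact ih.mul hT

lemma intertwines_list_prod (l : List (Function.End ((Fin d → ℤ) → ℝ) × LatticeAlgebra d))
    (hl : ∀ p ∈ l, Intertwines p.1 p.2) :
    Intertwines (l.map Prod.fst).prod (l.map Prod.snd).prod := by
  induction l with
  | nil => intro f; rw [List.map_nil, List.map_nil, List.prod_nil, List.prod_nil, one_mul]; rfl
  | cons p l ih =>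
    simp only [List.map_cons, List.prod_cons]
    exact (hl p List.mem_cons_self).mul (ih fun q hq => hl q (List.mem_cons_of_mem p hq))

lemma intertwines_mixedDiff (μ : Fin d → ℕ) : Intertwines (mixedDiff d μ) (diffSymbol d μ) := by
  have := intertwines_list_prod
    (List.ofFn fun i => (forwardDiff d i ^ μ i, (1 - shiftMonomial d i) ^ μ i))
    (by simp only [List.mem_ofFn, forall_exists_index]
        rintro _ i rfl
        exact (intertwines_forwardDiff i).pow _)
  simpa [mixedDiff, diffSymbol, List.map_ofFn, Function.comp_def, List.prod_ofFn] using this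

def differenceSpan (d N : ℕ) : Submodule ℝ ((Fin d → ℤ) → ℝ) :=
  Submodule.span ℝ
    { g : (Fin d → ℤ) → ℝ | ∃ (μ : Fin d → ℕ) (β : Fin d → ℤ),
        (∑ i : Fin d, μ i) = N + 1 ∧ g = mixedDiff d μ (kronDelta d β) }

lemma kronDelta_eq_coeff_single (β : Fin d → ℤ) :
    kronDelta d β = (single β (1 : ℝ)).coeff := by
  funext l
  simp [kronDelta, Finsupp.single_apply, eq_comm]

lemma coeff_diffSymbol_mul_mem_differenceSpan {N : ℕ} {μ : Fin d → ℕ} (hμ : ∑ i, μ i = N + 1)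
    (f : LatticeAlgebra d) : ⇑(diffSymbol d μ * f).coeff ∈ differenceSpan d N := by
  rw [← sum_coeff_single f, Finsupp.sum, mul_sum, coeff_sum, Finsupp.coe_finsetSum]
  refine Submodule.sum_mem _ fun β _ => ?_
  rw [← mul_one (f.coeff β), ← smul_single', mul_smul_comm, coeff_smul, Finsupp.coe_smul]
  refine Submodule.smul_mem _ _ (Submodule.subset_span ⟨μ, β, hμ, ?_⟩)
  rw [kronDelta_eq_coeff_single, intertwines_mixedDiff]

lemma coeff_diffSymbol_mul_mem_differenceSpan_of_lt {N : ℕ} {t : Fin d → ℕ}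
    (ht : N < ∑ i, t i) (f : LatticeAlgebra d) :
    ⇑(diffSymbol d t * f).coeff ∈ differenceSpan d N := by
  obtain ⟨μ, hμt, hμ⟩ := Finsupp.exists_le_degree_eq (Finsupp.equivFunOnFinite.symm t) (N + 1)
    (by simpa [Finsupp.degree_eq_sum] using ht)
  have hsplit : diffSymbol d t = diffSymbol d μ * diffSymbol d (t - μ) := by
    simp only [diffSymbol, ← prod_mul_distrib, ← pow_add]
    congr! with i
    rw [Pi.sub_apply, Nat.add_sub_cancel' (by simpa using hμt i)]
  rw [hsplit, mul_assoc]
  exact coeff_diffSymbol_mul_mem_differenceSpan (by simpa [Finsupp.degree_eq_sum] using hμ) _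

lemma single_eq_single_mul_prod_shiftMonomial_pow {v k : Fin d → ℤ} (h : v ≤ k) :
    single k (1 : ℝ) = single v 1 * ∏ i, shiftMonomial d i ^ (k i - v i).toNat := by
  simp only [shiftMonomial, single_pow, one_pow, prod_single, single_mul_single, mul_one,
    prod_const_one]
  congr 1
  funext j
  simp [Finset.sum_apply, Pi.single_apply, h j]

lemma single_eq_sum_smul_diffSymbol_mul_single {v w k : Fin d → ℤ} (hvk : v ≤ k) (hkw : k ≤ w) :
    single k (1 : ℝ) = ∑ t ∈ Fintype.piFinset fun i => range ((w i - v i).toNat + 1),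
      ((-1) ^ (∑ i, t i) * ∏ i, ((k i - v i).toNat.choose (t i) : ℝ)) •
        (diffSymbol d t * single v 1) := by
  rw [single_eq_single_mul_prod_shiftMonomial_pow hvk,
    prod_pow_eq_sum_piFinset_zsmul_prod_one_sub_pow _
      (fun i => Int.toNat_le_toNat (sub_le_sub_right (hkw i) _)), mul_sum]
  refine sum_congr rfl fun t _ => ?_
  rw [← Int.cast_smul_eq_zsmul ℝ, mul_smul_comm, mul_comm, diffSymbol]
  push_cast
  rw [prod_mul_distrib, prod_pow_eq_pow_sum]

lemma eq_sum_smul_coeff_diffSymbol_mul_single {c : (Fin d → ℤ) → ℝ} {s : Finset (Fin d → ℤ)}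
    (hs : Function.support c ⊆ s) {v w : Fin d → ℤ} (hv : ∀ k ∈ s, v ≤ k) (hw : ∀ k ∈ s, k ≤ w) :
    c = ∑ t ∈ Fintype.piFinset fun i => range ((w i - v i).toNat + 1),
      ((-1) ^ (∑ i, t i) * ∑ k ∈ s, c k * ∏ i, ((k i - v i).toNat.choose (t i) : ℝ)) •
        ⇑(diffSymbol d t * single v (1 : ℝ)).coeff := by
  have hc : c = ⇑(∑ k ∈ s, c k • (single k 1 : LatticeAlgebra d)).coeff := by
    funext l
    by_cases hl : l ∈ s
    · simp [coeff_sum, Finsupp.single_apply, hl]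
    · simp [coeff_sum, Finsupp.single_apply, hl, Function.notMem_support.1 (fun h => hl (hs h))]
  conv_lhs => rw [hc]
  rw [sum_congr rfl fun k hk => by
      rw [single_eq_sum_smul_diffSymbol_mul_single (hv k hk) (hw k hk), smul_sum], sum_comm]
  simp only [coeff_sum, Finsupp.coe_finsetSum, coeff_smul, Finsupp.coe_smul, smul_smul, ← sum_smul]
  refine sum_congr rfl fun t _ => ?_
  rw [mul_sum]
  congr! 2 with k
  ring

noncomputable def shiftedDescPochhammer (v : Fin d → ℤ) (t : Fin d → ℕ) :
    MvPolynomial (Fin d) ℝ :=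
  ∏ i, ∏ j ∈ range (t i), (MvPolynomial.X i - MvPolynomial.C ((v i : ℝ) + j))

lemma totalDegree_shiftedDescPochhammer_le (v : Fin d → ℤ) (t : Fin d → ℕ) :
    (shiftedDescPochhammer v t).totalDegree ≤ ∑ i, t i := by
  refine (MvPolynomial.totalDegree_finsetProd _ _).trans (sum_le_sum fun i _ => ?_)
  refine (MvPolynomial.totalDegree_finsetProd _ _).trans ?_
  calc _ ≤ ∑ _j ∈ range (t i), 1 := sum_le_sum fun j _ =>
        (MvPolynomial.totalDegree_sub_C_le _ _).trans (MvPolynomial.totalDegree_X i).le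
    _ = t i := by simp

lemma eval_shiftedDescPochhammer {v k : Fin d → ℤ} (h : v ≤ k) (t : Fin d → ℕ) :
    MvPolynomial.eval (fun i => (k i : ℝ)) (shiftedDescPochhammer v t) =
      (∏ i, ((t i).factorial : ℝ)) * ∏ i, ((k i - v i).toNat.choose (t i) : ℝ) := by
  rw [← prod_mul_distrib, shiftedDescPochhammer, map_prod]
  refine prod_congr rfl fun i _ => ?_
  have hcast : ((k i : ℝ) - v i) = ((k i - v i).toNat : ℝ) := by
    rw [← Int.cast_sub, ← Int.cast_natCast, Int.toNat_of_nonneg (sub_nonneg.2 (h i))]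
  simp only [map_prod, map_sub, MvPolynomial.eval_X, MvPolynomial.eval_C, sub_add_eq_sub_sub,
    hcast, ← descPochhammer_eval_eq_prod_range, descPochhammer_eval_eq_descFactorial,
    Nat.descFactorial_eq_factorial_mul_choose, Nat.cast_mul]

lemma sum_mul_prod_choose_eq_zero {N : ℕ} {c : (Fin d → ℤ) → ℝ}
    (hannih : ∀ P : MvPolynomial (Fin d) ℝ, P.totalDegree ≤ N →
      HasSum (fun k : Fin d → ℤ => c k * MvPolynomial.eval (fun i => (k i : ℝ)) P) 0)
    {s : Finset (Fin d → ℤ)} (hs : Function.support c ⊆ s) {v : Fin d → ℤ}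
    (hv : ∀ k ∈ s, v ≤ k) {t : Fin d → ℕ} (ht : ∑ i, t i ≤ N) :
    ∑ k ∈ s, c k * ∏ i, ((k i - v i).toNat.choose (t i) : ℝ) = 0 := by
  have hmoment := (hannih _ ((totalDegree_shiftedDescPochhammer_le v t).trans ht)).unique
    (hasSum_sum_of_ne_finset_zero fun k hk => by
      rw [Function.notMem_support.1 fun h => hk (hs h), zero_mul])
  rw [sum_congr rfl fun k hk => by rw [eval_shiftedDescPochhammer (hv k hk), mul_left_comm],
    ← mul_sum] at hmoment
  exact (mul_eq_zero.1 hmoment.symm).resolve_left (by positivity)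

end

theorem annihilates_polynomials_in_span_of_differences_general
    (d N : ℕ) (c : (Fin d → ℤ) → ℝ)
    (hfin : (Function.support c).Finite)
    (hannih : ∀ P : MvPolynomial (Fin d) ℝ, P.totalDegree ≤ N →
      HasSum (fun k : Fin d → ℤ =>
        c k * MvPolynomial.eval (fun i => (k i : ℝ)) P) 0) :
    c ∈ Submodule.span ℝ
      { g : (Fin d → ℤ) → ℝ |
        ∃ (μ : Fin d → ℕ) (β : Fin d → ℤ),
          (∑ i : Fin d, μ i) = N + 1 ∧
          g = mixedDiff d μ (kronDelta d β) } := by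
  obtain ⟨v, hv⟩ := hfin.bddBelow
  obtain ⟨w, hw⟩ := hfin.bddAbove
  have hs : Function.support c ⊆ hfin.toFinset := hfin.coe_toFinset.symm.subset
  have hv' : ∀ k ∈ hfin.toFinset, v ≤ k := fun k hk => hv (hfin.mem_toFinset.1 hk)
  have hw' : ∀ k ∈ hfin.toFinset, k ≤ w := fun k hk => hw (hfin.mem_toFinset.1 hk)
  change c ∈ differenceSpan d N
  rw [eq_sum_smul_coeff_diffSymbol_mul_single hs hv' hw']
  refine Submodule.sum_mem _ fun t _ => ?_
  rcases le_or_gt (∑ i, t i) N with hle | hlt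
  · rw [sum_mul_prod_choose_eq_zero hannih hs hv' hle, mul_zero, zero_smul]
    exact Submodule.zero_mem _
  · exact Submodule.smul_mem _ _ (coeff_diffSymbol_mul_mem_differenceSpan_of_lt hlt _)

/-- A finitely supported sequence annihilating all polynomials of
total degree ≤ N is a finite linear combination of mixed differences
∇^μ δ_{·−β} with |μ| = N + 1. -/
theorem annihilates_polynomials_in_span_of_differences
    (d N : ℕ) (hd : 0 < d) (c : (Fin d → ℤ) → ℝ)
    (hfin : (Function.support c).Finite)
    (hannih : ∀ P : MvPolynomial (Fin d) ℝ, P.totalDegree ≤ N →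
      HasSum (fun k : Fin d → ℤ =>
        c k * MvPolynomial.eval (fun i => (k i : ℝ)) P) 0) :
    c ∈ Submodule.span ℝ
      { g : (Fin d → ℤ) → ℝ |
        ∃ (μ : Fin d → ℕ) (β : Fin d → ℤ),
          (∑ i : Fin d, μ i) = N + 1 ∧
          g = mixedDiff d μ (kronDelta d β) } :=
  annihilates_polynomials_in_span_of_differences_general d N c hfin hannih
end

section
/- For the hexagonal interpolatory scheme: given a bounded sequence v: ℤ² → ℝ, define the refined sequence w: ℤ² → ℝ by w_{Mk} = v_k, w_{Mk+ε₁} = ½v_k + ½v_{k+e₁}, w_{Mk+ε₂} equal either to ¼v_{k+e₁} + ½v_{k+e₂} + ¼v_k or to ½v_k + ¼v_{k+e₂} + ¼v_{k+e₁+e₂} (choice may depend on k), and w_{Mk+ε₃} equal either to ¼v_{k+e₂} + ¼v_{k+e₁+e₂} + ½v_{k+e₁} or to ¼v_k + ¼v_{k+e₁} + ½v_{k+e₁+e₂}, where M = [[2,1],[0,-2]] and ε₀=(0,0), ε₁=(1,0), ε₂=(1,-1), ε₃=(2,-1). Then sup over all adjacent pairs of refined values satisfies ‖Δ¹w‖_∞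 ≤ (3/4)‖Δ¹v‖_∞, where ‖Δ¹u‖_∞ = max(sup_k|u_{k+e₁}−u_k|, sup_k|u_{k+e₂}−u_k|). -/
/-!
Every refined value is an average of the values of `v` at the corners of one unit cell
`k, k + e₁, k + e₂, k + e₁ + e₂`, and each pair of neighbours of the refined grid lies over one
cell or over two horizontally adjacent cells. On such a configuration the difference of the two
refined values is a combination of first differences of `v` whose coefficients have absolute
values summing to at most `3/4`, whichever stencils are chosen at the cosets `ε₂`, `ε₃`.
-/

open Matrix

section CellEstimates

variable {D a b c d x y : ℝ}

/-- The two admissible stencils at `M k + ε₂`, where `a, b, c, d` are the values of `v` at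
`k, k + e₁, k + e₂, k + e₁ + e₂`. -/
def HexRule₂ (a b c d x : ℝ) : Prop :=
  x = 1 / 4 * b + 1 / 2 * c + 1 / 4 * a ∨ x = 1 / 2 * a + 1 / 4 * c + 1 / 4 * d

def HexRule₃ (a b c d y : ℝ) : Prop :=
  y = 1 / 4 * c + 1 / 4 * d + 1 / 2 * b ∨ y = 1 / 4 * a + 1 / 4 * b + 1 / 2 * d

def CellBound (D a b c d : ℝ) : Prop :=
  |b - a| ≤ D ∧ |c - a| ≤ D ∧ |d - c| ≤ D ∧ |d - b| ≤ D

theorem abs_midpoint_sub_left_le (h : |b - a| ≤ D) :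
    |1 / 2 * a + 1 / 2 * b - a| ≤ 3 / 4 * D := by
  rw [abs_le] at h ⊢
  constructor <;> linarith

theorem abs_sub_midpoint_le (h : |b - a| ≤ D) :
    |b - (1 / 2 * a + 1 / 2 * b)| ≤ 3 / 4 * D := by
  rw [abs_le] at h ⊢
  constructor <;> linarith

namespace CellBound

theorem abs_rule₃_sub_rule₂_le (h : CellBound D a b c d) (hx : HexRule₂ a b c d x)
    (hy : HexRule₃ a b c d y) : |y - x| ≤ 3 / 4 * D := by
  obtain ⟨h₁, h₂, h₃, h₄⟩ := h
  rw [abs_le] at h₁ h₂ h₃ h₄ ⊢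
  rcases hx with rfl | rfl <;> rcases hy with rfl | rfl <;> constructor <;> linarith

theorem abs_rule₂_sub_rule₃_le {b' d' : ℝ} (h : CellBound D a b c d)
    (h' : CellBound D b b' d d') (hy : HexRule₃ a b c d y) (hx : HexRule₂ b b' d d' x) :
    |x - y| ≤ 3 / 4 * D := by
  obtain ⟨h₁, h₂, h₃, h₄⟩ := h
  obtain ⟨h₅, h₆, h₇, h₈⟩ := h'
  rw [abs_le] at h₁ h₂ h₃ h₄ h₅ h₆ h₇ h₈ ⊢
  rcases hx with rfl | rfl <;> rcases hy with rfl | rfl <;> constructor <;> linarith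

theorem abs_rule₂_sub_le (h : CellBound D a b c d) (hx : HexRule₂ a b c d x) :
    |x - c| ≤ 3 / 4 * D := by
  obtain ⟨h₁, h₂, h₃, h₄⟩ := h
  rw [abs_le] at h₁ h₂ h₃ h₄ ⊢
  rcases hx with rfl | rfl <;> constructor <;> linarith

theorem abs_midpoint_sub_rule₂_le (h : CellBound D a b c d) (hx : HexRule₂ a b c d x) :
    |1 / 2 * a + 1 / 2 * b - x| ≤ 3 / 4 * D := by
  obtain ⟨h₁, h₂, h₃, h₄⟩ := h
  rw [abs_le] at h₁ h₂ h₃ h₄ ⊢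
  rcases hx with rfl | rfl <;> constructor <;> linarith

theorem abs_rule₃_sub_midpoint_le (h : CellBound D a b c d) (hy : HexRule₃ a b c d y) :
    |y - (1 / 2 * c + 1 / 2 * d)| ≤ 3 / 4 * D := by
  obtain ⟨h₁, h₂, h₃, h₄⟩ := h
  rw [abs_le] at h₁ h₂ h₃ h₄ ⊢
  rcases hy with rfl | rfl <;> constructor <;> linarith

theorem abs_sub_rule₃_le (h : CellBound D a b c d) (hy : HexRule₃ a b c d y) :
    |b - y| ≤ 3 / 4 * D := by
  obtain ⟨h₁, h₂, h₃, h₄⟩ := h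
  rw [abs_le] at h₁ h₂ h₃ h₄ ⊢
  rcases hy with rfl | rfl <;> constructor <;> linarith

end CellBound

end CellEstimates

def hexM : Matrix (Fin 2) (Fin 2) ℤ := !![2, 1; 0, -2]

theorem hexM_mulVec (k : Fin 2 → ℤ) : hexM *ᵥ k = ![2 * k 0 + k 1, -(2 * k 1)] := by
  simp [hexM, vecHead, vecTail]

/- The witness is the cell over `x`: `k 1` comes from `x 1` by floor division by 2, then `k 0`
from `x 0 + x 1 / 2`. For vertical edges starting at `ε₀` or `ε₁` it is the cell below. -/
theorem exists_hexM_edge_e₁ (x : Fin 2 → ℤ) : ∃ k,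
    (x = hexM *ᵥ k ∧ x + ![1, 0] = hexM *ᵥ k + ![1, 0]) ∨
    (x = hexM *ᵥ k + ![1, 0] ∧ x + ![1, 0] = hexM *ᵥ (k + ![1, 0])) ∨
    (x = hexM *ᵥ k + ![1, -1] ∧ x + ![1, 0] = hexM *ᵥ k + ![2, -1]) ∨
    (x = hexM *ᵥ k + ![2, -1] ∧ x + ![1, 0] = hexM *ᵥ (k + ![1, 0]) + ![1, -1]) := by
  refine ⟨![(x 0 + x 1 / 2) / 2, -(x 1 / 2) - x 1 % 2], ?_⟩
  simp only [funext_iff, Fin.forall_fin_two, Pi.add_apply, hexM_mulVec, cons_val_zero,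
    cons_val_one]
  omega

theorem exists_hexM_edge_e₂ (x : Fin 2 → ℤ) : ∃ k,
    (x = hexM *ᵥ (k + ![0, 1]) ∧ x + ![0, 1] = hexM *ᵥ k + ![1, -1]) ∨
    (x = hexM *ᵥ (k + ![0, 1]) + ![1, 0] ∧ x + ![0, 1] = hexM *ᵥ k + ![2, -1]) ∨
    (x = hexM *ᵥ k + ![1, -1] ∧ x + ![0, 1] = hexM *ᵥ k + ![1, 0]) ∨
    (x = hexM *ᵥ k + ![2, -1] ∧ x + ![0, 1] = hexM *ᵥ (k + ![1, 0])) := by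
  refine ⟨![(x 0 + x 1 / 2) / 2, -(x 1 / 2) - 1], ?_⟩
  simp only [funext_iff, Fin.forall_fin_two, Pi.add_apply, hexM_mulVec, cons_val_zero,
    cons_val_one]
  omega

theorem add_e₁_add_e₂ (k : Fin 2 → ℤ) : k + ![1, 0] + ![0, 1] = k + ![1, 1] := by
  simp only [add_assoc, vec2_add]
  norm_num

theorem add_e₂_add_e₁ (k : Fin 2 → ℤ) : k + ![0, 1] + ![1, 0] = k + ![1, 1] := by
  simp only [add_assoc, vec2_add]
  norm_num

structure IsHexRefinement (v w : (Fin 2 → ℤ) → ℝ) : Prop where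
  coset₀ : ∀ k, w (hexM *ᵥ k) = v k
  coset₁ : ∀ k, w (hexM *ᵥ k + ![1, 0]) = 1 / 2 * v k + 1 / 2 * v (k + ![1, 0])
  coset₂ : ∀ k, HexRule₂ (v k) (v (k + ![1, 0])) (v (k + ![0, 1])) (v (k + ![1, 1]))
    (w (hexM *ᵥ k + ![1, -1]))
  coset₃ : ∀ k, HexRule₃ (v k) (v (k + ![1, 0])) (v (k + ![0, 1])) (v (k + ![1, 1]))
    (w (hexM *ᵥ k + ![2, -1]))

namespace IsHexRefinement

variable {v w : (Fin 2 → ℤ) → ℝ} {D : ℝ}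

theorem abs_sub_e₁_le (hw : IsHexRefinement v w)
    (hv : ∀ k, CellBound D (v k) (v (k + ![1, 0])) (v (k + ![0, 1])) (v (k + ![1, 1])))
    (x : Fin 2 → ℤ) : |w (x + ![1, 0]) - w x| ≤ 3 / 4 * D := by
  obtain ⟨k, ⟨rfl, he⟩ | ⟨rfl, he⟩ | ⟨rfl, he⟩ | ⟨rfl, he⟩⟩ := exists_hexM_edge_e₁ x <;>
    rw [he]
  · rw [hw.coset₁, hw.coset₀]
    exact abs_midpoint_sub_left_le (hv k).1
  · rw [hw.coset₁, hw.coset₀]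
    exact abs_sub_midpoint_le (hv k).1
  · exact (hv k).abs_rule₃_sub_rule₂_le (hw.coset₂ k) (hw.coset₃ k)
  · have hnext := hw.coset₂ (k + ![1, 0])
    have hcell := hv (k + ![1, 0])
    rw [add_e₁_add_e₂] at hnext hcell
    exact (hv k).abs_rule₂_sub_rule₃_le hcell (hw.coset₃ k) hnext

theorem abs_sub_e₂_le (hw : IsHexRefinement v w)
    (hv : ∀ k, CellBound D (v k) (v (k + ![1, 0])) (v (k + ![0, 1])) (v (k + ![1, 1])))
    (x : Fin 2 → ℤ) : |w (x + ![0, 1]) - w x| ≤ 3 / 4 * D := by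
  obtain ⟨k, ⟨rfl, he⟩ | ⟨rfl, he⟩ | ⟨rfl, he⟩ | ⟨rfl, he⟩⟩ := exists_hexM_edge_e₂ x <;>
    rw [he]
  · rw [hw.coset₀]
    exact (hv k).abs_rule₂_sub_le (hw.coset₂ k)
  · rw [hw.coset₁, add_e₂_add_e₁]
    exact (hv k).abs_rule₃_sub_midpoint_le (hw.coset₃ k)
  · rw [hw.coset₁]
    exact (hv k).abs_midpoint_sub_rule₂_le (hw.coset₂ k)
  · rw [hw.coset₀]
    exact (hv k).abs_sub_rule₃_le (hw.coset₃ k)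

end IsHexRefinement

theorem bddAbove_range_abs_sub {G : Type*} [Add G] {v : G → ℝ} {C : ℝ} (hC : ∀ k, |v k| ≤ C)
    (e : G) : BddAbove (Set.range fun k => |v (k + e) - v k|) := by
  refine ⟨2 * C, ?_⟩
  rintro _ ⟨k, rfl⟩
  linarith [abs_sub (v (k + e)) (v k), hC (k + e), hC k]

theorem cellBound_of_abs_sub_le {v : (Fin 2 → ℤ) → ℝ} {D : ℝ}
    (h₁ : ∀ k, |v (k + ![1, 0]) - v k| ≤ D) (h₂ : ∀ k, |v (k + ![0, 1]) - v k| ≤ D)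
    (k : Fin 2 → ℤ) :
    CellBound D (v k) (v (k + ![1, 0])) (v (k + ![0, 1])) (v (k + ![1, 1])) := by
  refine ⟨h₁ k, h₂ k, ?_, ?_⟩
  · rw [← add_e₂_add_e₁]
    exact h₁ (k + ![0, 1])
  · rw [← add_e₁_add_e₂]
    exact h₂ (k + ![1, 0])

/-- The hexagonal interpolatory scheme (with any choice of
stencil at each point for the cosets ε₂, ε₃) contracts first differences by
a factor 3/4 in the sup norm. -/
theorem hexagonal_scheme_contraction
    (v w : (Fin 2 → ℤ) → ℝ)
    (hbdd : ∃ C : ℝ, ∀ k, |v k| ≤ C)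
    (M : Matrix (Fin 2) (Fin 2) ℤ) (hM : M = !![2, 1; 0, -2])
    (h0 : ∀ k : Fin 2 → ℤ, w (M.mulVec k) = v k)
    (h1 : ∀ k : Fin 2 → ℤ, w (M.mulVec k + ![1, 0]) =
      (1 / 2) * v k + (1 / 2) * v (k + ![1, 0]))
    (h2 : ∀ k : Fin 2 → ℤ,
      w (M.mulVec k + ![1, -1]) =
          (1 / 4) * v (k + ![1, 0]) + (1 / 2) * v (k + ![0, 1]) + (1 / 4) * v k ∨
      w (M.mulVec k + ![1, -1]) =
          (1 / 2) * v k + (1 / 4) * v (k + ![0, 1]) + (1 / 4) * v (k + ![1, 1]))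
    (h3 : ∀ k : Fin 2 → ℤ,
      w (M.mulVec k + ![2, -1]) =
          (1 / 4) * v (k + ![0, 1]) + (1 / 4) * v (k + ![1, 1]) + (1 / 2) * v (k + ![1, 0]) ∨
      w (M.mulVec k + ![2, -1]) =
          (1 / 4) * v k + (1 / 4) * v (k + ![1, 0]) + (1 / 2) * v (k + ![1, 1])) :
    max (⨆ k : Fin 2 → ℤ, |w (k + ![1, 0]) - w k|)
        (⨆ k : Fin 2 → ℤ, |w (k + ![0, 1]) - w k|) ≤
    (3 / 4) * max (⨆ k : Fin 2 → ℤ, |v (k + ![1, 0]) - v k|)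
                  (⨆ k : Fin 2 → ℤ, |v (k + ![0, 1]) - v k|) := by
  obtain ⟨C, hC⟩ := hbdd
  subst hM
  have hw : IsHexRefinement v w := ⟨h0, h1, h2, h3⟩
  have hv := cellBound_of_abs_sub_le
    (fun k => (le_ciSup (bddAbove_range_abs_sub hC ![1, 0]) k).trans (le_max_left _ _))
    (fun k => (le_ciSup (bddAbove_range_abs_sub hC ![0, 1]) k).trans (le_max_right _ _))
  exact max_le (ciSup_le (hw.abs_sub_e₁_le hv)) (ciSup_le (hw.abs_sub_e₂_le hv))
end
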